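/- Let w be a finite rich word and let u be a non-palindromic factor of w. Let p be the longest palindromic prefix of u and q the longest palindromic suffix of u. Then p ≠ q, p is not a factor of q, and q is not a factor of p. -/

import Mathlib

/-!
Going from `v.dropLast` to `v` creates at most one new palindromic factor, namely the longest
palindromic suffix of `v`: any shorter palindromic suffix is a prefix of it, so already occurs
in `v.dropLast`. Hence a word of length `n` has at most `n + 1` palindromic factors, richness
passes to factors, and in a rich word every longest palindromic suffix is new, i.e. does not occur
in `v.dropLast`. If `u` is not a palindrome, its longest palindromic prefix `p` lies in
`u.dropLast`, so the longest palindromic suffix `q` cannot be a factor of `p`; reversing `u`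
swaps the roles of `p` and `q`.
-/

/-- The finset of (distinct) palindromic factors of a finite word `w`,
including the empty word. -/
def palFactors {A : Type*} [DecidableEq A] (w : List A) : Finset (List A) :=
  ((w.inits.flatMap List.tails).filter (fun u => u.reverse = u)).toFinset

/-- A finite word `w` is rich if it has exactly `|w| + 1` distinct palindromic factors. -/
def Rich {A : Type*} [DecidableEq A] (w : List A) : Prop :=
  (palFactors w).card = w.length + 1

/-- `p` is the longest palindromic prefix of `u`. -/
def LongestPalPrefix {A : Type*} (p u : List A) : Prop :=
  p <+: u ∧ p.reverse = p ∧ ∀ p' : List A, p' <+: u → p'.reverse = p' → p'.length ≤ p.length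

/-- `q` is the longest palindromic suffix of `u`. -/
def LongestPalSuffix {A : Type*} (q u : List A) : Prop :=
  q <:+ u ∧ q.reverse = q ∧ ∀ q' : List A, q' <:+ u → q'.reverse = q' → q'.length ≤ q.length

namespace List

variable {A : Type*}

theorem IsPrefix.prefix_dropLast {p v : List A} (h : p <+: v) (hlt : p.length < v.length) :
    p <+: v.dropLast := by
  obtain ⟨r, rfl⟩ := h
  have hr : r ≠ [] := by rintro rfl; simp at hlt
  rw [dropLast_append_of_ne_nil hr]
  exact prefix_append _ _

theorem IsInfix.infix_dropLast_or_suffix {x v : List A} (h : x <:+: v) :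
    x <:+: v.dropLast ∨ x <:+ v := by
  obtain ⟨a, b, rfl⟩ := h
  rcases eq_or_ne b [] with rfl | hb
  · exact Or.inr ⟨a, by simp⟩
  · rw [dropLast_append_of_ne_nil hb]
    exact Or.inl ⟨a, b.dropLast, by simp⟩

theorem infix_dropLast_of_palindrome_suffix {s t v : List A} (hs : s.reverse = s)
    (ht : t.reverse = t) (hsv : s <:+ v) (htv : t <:+ v) (hlt : s.length < t.length) :
    s <:+: v.dropLast := by
  have hst : s <:+ t := (suffix_or_suffix_of_suffix hsv htv).resolve_right
    fun h => absurd h.length_le (not_le.2 hlt)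
  obtain ⟨r, rfl⟩ : s <+: t := by simpa [hs, ht] using hst.reverse
  obtain ⟨x, rfl⟩ := htv
  have hr : r ≠ [] := by rintro rfl; simp at hlt
  rw [← append_assoc, dropLast_append_of_ne_nil hr]
  exact ⟨x, r.dropLast, rfl⟩

end List

open List

section Palindromes

variable {A : Type*}

theorem LongestPalPrefix.reverse {p u : List A} (hp : LongestPalPrefix p u) :
    LongestPalSuffix p u.reverse := by
  obtain ⟨hpu, hpal, hmax⟩ := hp
  refine ⟨by simpa [hpal] using hpu.reverse, hpal, fun q hq hqpal => hmax q ?_ hqpal⟩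
  simpa [hqpal] using hq.reverse

theorem LongestPalSuffix.reverse {q u : List A} (hq : LongestPalSuffix q u) :
    LongestPalPrefix q u.reverse := by
  obtain ⟨hqu, hpal, hmax⟩ := hq
  refine ⟨by simpa [hpal] using hqu.reverse, hpal, fun p hp hppal => hmax p ?_ hppal⟩
  simpa [hppal] using hp.reverse

theorem LongestPalPrefix.prefix_dropLast {p u : List A} (hp : LongestPalPrefix p u)
    (hu : u.reverse ≠ u) : p <+: u.dropLast := by
  refine hp.1.prefix_dropLast (lt_of_le_of_ne hp.1.length_le fun h => hu ?_)
  rw [← hp.1.eq_of_length h, hp.2.1]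

variable [DecidableEq A]

theorem mem_palFactors {w x : List A} : x ∈ palFactors w ↔ x <:+: w ∧ x.reverse = x := by
  simp only [palFactors, mem_toFinset, mem_filter, mem_flatMap, mem_inits, mem_tails,
    decide_eq_true_eq, and_congr_left_iff]
  refine fun _ => ⟨fun ⟨t, htw, hxt⟩ => hxt.isInfix.trans htw.isInfix, ?_⟩
  rintro ⟨s, t, rfl⟩
  exact ⟨s ++ x, prefix_append _ _, suffix_append _ _⟩

theorem palFactors_reverse (w : List A) : palFactors w.reverse = palFactors w := by
  ext x
  simp only [mem_palFactors, and_congr_left_iff]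
  intro hx
  rw [← reverse_infix, hx, reverse_reverse]

theorem palindrome_suffix_of_mem_palFactors_sdiff {v x : List A}
    (hx : x ∈ palFactors v \ palFactors v.dropLast) :
    x <:+ v ∧ x.reverse = x ∧ ¬ x <:+: v.dropLast := by
  obtain ⟨hx, hxold⟩ := Finset.mem_sdiff.1 hx
  obtain ⟨hxv, hpal⟩ := mem_palFactors.1 hx
  have hxnew : ¬ x <:+: v.dropLast := fun h => hxold (mem_palFactors.2 ⟨h, hpal⟩)
  exact ⟨hxv.infix_dropLast_or_suffix.resolve_left hxnew, hpal, hxnew⟩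

theorem card_palFactors_sdiff_dropLast_le_one (v : List A) :
    (palFactors v \ palFactors v.dropLast).card ≤ 1 := by
  refine Finset.card_le_one.2 fun s hs t ht => ?_
  obtain ⟨hsv, hspal, hsnew⟩ := palindrome_suffix_of_mem_palFactors_sdiff hs
  obtain ⟨htv, htpal, htnew⟩ := palindrome_suffix_of_mem_palFactors_sdiff ht
  rcases lt_trichotomy s.length t.length with hlt | heq | hgt
  · exact absurd (infix_dropLast_of_palindrome_suffix hspal htpal hsv htv hlt) hsnew
  · exact (suffix_of_suffix_length_le hsv htv heq.le).eq_of_length heq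
  · exact absurd (infix_dropLast_of_palindrome_suffix htpal hspal htv hsv hgt) htnew

theorem card_palFactors_le_card_dropLast_add_one (v : List A) :
    (palFactors v).card ≤ (palFactors v.dropLast).card + 1 :=
  (Finset.card_le_card_sdiff_add_card (t := palFactors v.dropLast)).trans <| by
    have := card_palFactors_sdiff_dropLast_le_one v
    omega

theorem card_palFactors_le (v : List A) : (palFactors v).card ≤ v.length + 1 := by
  induction v using reverseRecOn with
  | nil => simp [palFactors]
  | append_singleton l a ih =>
    have := card_palFactors_le_card_dropLast_add_one (l ++ [a])
    simp only [dropLast_concat] at this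
    simp only [length_append, length_singleton]
    omega

theorem Rich.reverse {v : List A} (hv : Rich v) : Rich v.reverse := by
  rwa [Rich, palFactors_reverse, length_reverse]

theorem Rich.dropLast {v : List A} (hv : Rich v) : Rich v.dropLast := by
  have h₁ := card_palFactors_le_card_dropLast_add_one v
  have h₂ := card_palFactors_le v.dropLast
  rcases eq_or_ne v [] with rfl | hne
  · exact hv
  have h₃ : v.dropLast.length + 1 = v.length := by
    rw [length_dropLast]; have := length_pos_iff.2 hne; omega
  unfold Rich at *
  omega

theorem Rich.isPrefix {p v : List A} (hv : Rich v) (hp : p <+: v) : Rich p := by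
  induction v using reverseRecOn with
  | nil => rwa [prefix_nil.1 hp]
  | append_singleton l a ih =>
    rcases hp.length_le.lt_or_eq with hlt | heq
    · exact ih (by simpa using hv.dropLast) (by simpa using hp.prefix_dropLast hlt)
    · rwa [hp.eq_of_length heq]

theorem Rich.isInfix {v w : List A} (hw : Rich w) (h : v <:+: w) : Rich v := by
  obtain ⟨t, hvt, htw⟩ := infix_iff_prefix_suffix.1 h
  have ht : Rich t := by simpa using (hw.reverse.isPrefix htw.reverse).reverse
  exact ht.isPrefix hvt

theorem LongestPalSuffix.not_infix_dropLast {q v : List A} (hv : Rich v) (hne : v ≠ [])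
    (hq : LongestPalSuffix q v) : ¬ q <:+: v.dropLast := by
  intro hqold
  have hcard : (palFactors v.dropLast).card < (palFactors v).card := by
    have hle := card_palFactors_le v.dropLast
    have hpos := length_pos_iff.2 hne
    rw [length_dropLast] at hle
    unfold Rich at hv
    omega
  obtain ⟨x, hx, hxold⟩ := Finset.exists_mem_notMem_of_card_lt_card hcard
  obtain ⟨hxv, hxpal, hxnew⟩ := palindrome_suffix_of_mem_palFactors_sdiff
    (Finset.mem_sdiff.2 ⟨hx, hxold⟩)
  have hxq : x <:+ q := suffix_of_suffix_length_le hxv hq.1 (hq.2.2 x hxv hxpal)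
  exact hxnew (hxq.isInfix.trans hqold)

theorem LongestPalSuffix.not_infix_of_longestPalPrefix {p q u : List A} (hu : Rich u)
    (hnp : u.reverse ≠ u) (hp : LongestPalPrefix p u) (hq : LongestPalSuffix q u) :
    ¬ q <:+: p := fun hqp =>
  hq.not_infix_dropLast hu (by rintro rfl; exact hnp rfl)
    (hqp.trans (hp.prefix_dropLast hnp).isInfix)

end Palindromes

/-- If `u` is a non-palindromic factor of a finite rich word `w`, with longest
palindromic prefix `p` and longest palindromic suffix `q`, then `p ≠ q` and `p` and
`q` are not factors of each other. -/
theorem longest_pal_prefix_suffix_incomparable {A : Type*} [DecidableEq A]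
    (w u p q : List A) (hw : Rich w) (hu : u <:+: w) (hnp : u.reverse ≠ u)
    (hp : LongestPalPrefix p u) (hq : LongestPalSuffix q u) :
    p ≠ q ∧ ¬ p <:+: q ∧ ¬ q <:+: p := by
  have hru : Rich u := hw.isInfix hu
  have hnp' : u.reverse.reverse ≠ u.reverse := by rwa [reverse_reverse, ne_comm]
  have hpq : ¬ p <:+: q :=
    hp.reverse.not_infix_of_longestPalPrefix hru.reverse hnp' hq.reverse
  exact ⟨fun h => hpq (h ▸ infix_refl p), hpq, hq.not_infix_of_longestPalPrefix hru hnp hp⟩
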